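/- Convergence in Wasserstein–Orlicz distance implies narrow convergence: if W_ψ(μₙ, μ) → 0 then μₙ → μ narrowly in P(X), i.e. ∫φ dμₙ → ∫φ dμ for every bounded continuous φ:X→ℝ. -/

import Mathlib

open MeasureTheory Filter Set ENNReal NNReal Topology

noncomputable section

/-- Luxemburg (Orlicz) norm of a nonnegative function. -/
def luxNorm (ψ : ℝ≥0∞ → ℝ≥0∞) {Ω : Type*} [MeasurableSpace Ω]
    (ν : Measure Ω) (u : Ω → ℝ≥0∞) : ℝ≥0∞ :=
  sInf {l : ℝ≥0∞ | 0 < l ∧ ∫⁻ x, ψ (u x / l) ∂ν ≤ 1}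

/-- Standard assumptions on the Orlicz function `ψ`: convex, lower semicontinuous,
non-decreasing, `ψ 0 = 0`, `ψ x → ∞` as `x → ∞`. -/
structure IsOrlicz (ψ : ℝ≥0∞ → ℝ≥0∞) : Prop where
  convex : ∀ a b x y : ℝ≥0∞, a + b = 1 → ψ (a * x + b * y) ≤ a * ψ x + b * ψ y
  lsc : LowerSemicontinuous ψ
  mono : Monotone ψ
  zero : ψ 0 = 0
  tendsto_top : ∀ C : ℝ≥0∞, ∃ M : ℝ≥0∞, ∀ x, M ≤ x → C ≤ ψ x

/-- Superlinearity at infinity: `ψ x / x → ∞`. -/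
def Superlinear (ψ : ℝ≥0∞ → ℝ≥0∞) : Prop :=
  ∀ C : ℝ≥0, ∃ M : ℝ≥0, ∀ x : ℝ≥0, M ≤ x → (C : ℝ≥0∞) * x ≤ ψ x

/-- Null right derivative at `0`: `ψ x / x → 0` as `x → 0⁺`. -/
def FlatAtZero (ψ : ℝ≥0∞ → ℝ≥0∞) : Prop :=
  ∀ ε : ℝ≥0, 0 < ε → ∃ δ : ℝ≥0, 0 < δ ∧ ∀ x : ℝ≥0, 0 < x → x ≤ δ → ψ x ≤ (ε : ℝ≥0∞) * x

/-- Legendre conjugate `ψ*(y) = sup_{x ≥ 0} (x y - ψ x)`. -/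
def conjOrlicz (ψ : ℝ≥0∞ → ℝ≥0∞) (y : ℝ≥0∞) : ℝ≥0∞ :=
  ⨆ x : ℝ≥0, (x : ℝ≥0∞) * y - ψ x

/-- Generalized inverse of `ψ` (with the convention of the paper). -/
def psiInv (ψ : ℝ≥0∞ → ℝ≥0∞) (s : ℝ≥0∞) : ℝ≥0∞ :=
  sSup {r : ℝ≥0∞ | ψ r ≤ s}

/-- `(X, τ, d)` is an extended Polish space: `d` is an extended distance, complete,
`d`-convergence implies `τ`-convergence, and `d` is `τ × τ` lower semicontinuous. -/
structure IsExtPolish (X : Type*) [TopologicalSpace X] (d : X → X → ℝ≥0∞) : Prop where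
  symm : ∀ x y, d x y = d y x
  eq_zero_iff : ∀ x y, d x y = 0 ↔ x = y
  triangle : ∀ x y z, d x z ≤ d x y + d y z
  complete : ∀ u : ℕ → X,
    (∀ ε : ℝ≥0∞, 0 < ε → ∃ N, ∀ m n, N ≤ m → N ≤ n → d (u m) (u n) < ε) →
    ∃ x, Tendsto (fun n => d (u n) x) atTop (𝓝 0)
  compat : ∀ (u : ℕ → X) (x : X),
    Tendsto (fun n => d (u n) x) atTop (𝓝 0) → Tendsto u atTop (𝓝 x)
  lsc : LowerSemicontinuous fun p : X × X => d p.1 p.2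

/-- Admissible transport plans between `μ` and `ν`. -/
def Couplings {X : Type*} [MeasurableSpace X] (μ ν : Measure X) : Set (Measure (X × X)) :=
  {γ | IsProbabilityMeasure γ ∧ γ.map Prod.fst = μ ∧ γ.map Prod.snd = ν}

/-- The Wasserstein–Orlicz extended distance. -/
def Wass (ψ : ℝ≥0∞ → ℝ≥0∞) {X : Type*} [MeasurableSpace X] (d : X → X → ℝ≥0∞)
    (μ ν : Measure X) : ℝ≥0∞ :=
  ⨅ γ ∈ Couplings μ ν, luxNorm ψ γ (fun p : X × X => d p.1 p.2)

/-- Absolutely continuous curve with finite `L^ψ` energy with respect to the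
extended distance `ρ`, on the interval `[a, b]`. -/
def IsACpsi (ψ : ℝ≥0∞ → ℝ≥0∞) {A : Type*} (ρ : A → A → ℝ≥0∞)
    (a b : ℝ) (u : ℝ → A) : Prop :=
  ∃ m : ℝ → ℝ≥0∞, luxNorm ψ (volume.restrict (Set.Icc a b)) m < ⊤ ∧
    ∀ s t : ℝ, a ≤ s → s ≤ t → t ≤ b → ρ (u s) (u t) ≤ ∫⁻ r in Set.Icc s t, m r

/-- The metric derivative of the curve `u` (with values in a space with extended
distance `ρ`) at time `t` within the interval `I` equals `L`. -/
def HasMDeriv {A : Type*} (ρ : A → A → ℝ≥0∞) (u : ℝ → A) (I : Set ℝ) (t : ℝ)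
    (L : ℝ≥0∞) : Prop :=
  Tendsto (fun h : ℝ => ρ (u (t + h)) (u t) / ENNReal.ofReal |h|)
    (𝓝[{h : ℝ | h ≠ 0 ∧ t + h ∈ I}] 0) (𝓝 L)

/-- The support of a Borel measure. -/
def measSupport {Y : Type*} [TopologicalSpace Y] [MeasurableSpace Y] (μ : Measure Y) : Set Y :=
  {y | ∀ U ∈ 𝓝 y, 0 < μ U}

open scoped BoundedContinuousFunction

/-!
Take near-optimal couplings `γₙ` of `μₙ` and `μ`. Since `ψ` is coercive, `luxNorm ψ γₙ d → 0`
forces `d(x, y) → 0` in `γₙ`-probability, and it suffices to show the same for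
`|φ x - φ y|`. Here the compatibility of `d` with the topology is used, but it is not
uniform in `y`: for each `y` the points `d`-close to `y` have `φ`-values close to `φ y`
only below a threshold depending on `y`. Disintegrating `γₙ` along the common marginal `μ`
turns this pointwise statement into a bound uniform in `n`, by dominated convergence in `y`.
-/

section Orlicz

variable {ψ : ℝ≥0∞ → ℝ≥0∞} {Ω : Type*} [MeasurableSpace Ω]

lemma IsOrlicz.exists_le_apply (hψ : IsOrlicz ψ) {C : ℝ≥0∞} (hC : C ≠ ⊤) :
    ∃ M : ℝ≥0∞, M ≠ ⊤ ∧ ∀ x, M ≤ x → C ≤ ψ x := by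
  have htop : ψ ⊤ = ⊤ := by
    by_contra h
    obtain ⟨M, hM⟩ := hψ.tendsto_top (ψ ⊤ + 1)
    exact (hM ⊤ le_top).not_gt (ENNReal.lt_add_right h one_ne_zero)
  -- `tendsto_top` alone may give `M = ⊤`; lower semicontinuity at `⊤` gives a finite threshold.
  have hlsc : ∀ᶠ x in 𝓝 ⊤, C < ψ x :=
    hψ.lsc ⊤ C (by show C < ψ ⊤; rw [htop]; exact hC.lt_top)
  obtain ⟨a, ha, h⟩ := ENNReal.nhds_top_basis.eventually_iff.mp hlsc
  exact ⟨a + 1, by simp [ha.ne], fun x hx =>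
    (h ((ENNReal.lt_add_right ha.ne one_ne_zero).trans_le hx)).le⟩

lemma lintegral_le_one_of_luxNorm_lt (hψ : Monotone ψ) {ν : Measure Ω} {u : Ω → ℝ≥0∞}
    {δ : ℝ≥0∞} (h : luxNorm ψ ν u < δ) : ∫⁻ x, ψ (u x / δ) ∂ν ≤ 1 := by
  obtain ⟨l, ⟨-, hl⟩, hlδ⟩ := sInf_lt_iff.mp h
  exact (lintegral_mono fun x => hψ (ENNReal.div_le_div_left hlδ.le _)).trans hl

lemma IsOrlicz.measure_le_of_luxNorm_lt (hψ : IsOrlicz ψ) {ν : Measure Ω} {u : Ω → ℝ≥0∞}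
    (hu : Measurable u) {r κ δ : ℝ≥0∞} (hκ₀ : κ ≠ 0) (hκ : κ ≠ ⊤) (hrδ : κ⁻¹ ≤ ψ (r / δ))
    (h : luxNorm ψ ν u < δ) : ν {x | r ≤ u x} ≤ κ :=
  calc ν {x | r ≤ u x} ≤ ν {x | κ⁻¹ ≤ ψ (u x / δ)} :=
        measure_mono fun x hx => hrδ.trans (hψ.mono (ENNReal.div_le_div_right hx _))
    _ ≤ (∫⁻ x, ψ (u x / δ) ∂ν) / κ⁻¹ :=
        meas_ge_le_lintegral_div (hψ.lsc.measurable.comp (hu.div_const δ)).aemeasurable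
          (ENNReal.inv_ne_zero.mpr hκ) (ENNReal.inv_ne_top.mpr hκ₀)
    _ ≤ 1 / κ⁻¹ := by gcongr; exact lintegral_le_one_of_luxNorm_lt hψ.mono h
    _ = κ := by rw [one_div, inv_inv]

theorem IsOrlicz.tendsto_measure_le_of_tendsto_luxNorm (hψ : IsOrlicz ψ) {ι : Type*}
    {l : Filter ι} {ν : ι → Measure Ω} {u : ι → Ω → ℝ≥0∞} (hu : ∀ i, Measurable (u i))
    (h : Tendsto (fun i => luxNorm ψ (ν i) (u i)) l (𝓝 0)) {r : ℝ≥0∞} (hr : 0 < r) :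
    Tendsto (fun i => ν i {x | r ≤ u i x}) l (𝓝 0) := by
  refine ENNReal.tendsto_nhds_zero.mpr fun κ hκ => ?_
  rcases eq_or_ne κ ⊤ with rfl | hκ_top
  · exact Eventually.of_forall fun _ => le_top
  obtain ⟨M, hM_top, hM⟩ := hψ.exists_le_apply (C := κ⁻¹) (ENNReal.inv_ne_top.mpr hκ.ne')
  -- with `r` itself, `r = ⊤` would give `r / (r / (M + 1)) = ⊤ / ⊤ = 0`
  set r' := min r 1
  have hr' : r' ≠ 0 := (lt_min hr one_pos).ne'
  have hr'_top : r' ≠ ⊤ := (min_le_right r 1).trans_lt one_lt_top |>.ne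
  have hδ : 0 < r' / (M + 1) := ENNReal.div_pos hr' (by simp [hM_top])
  have hrδ : κ⁻¹ ≤ ψ (r / (r' / (M + 1))) := hM _ <|
    calc M ≤ M + 1 := le_self_add
      _ = r' / (r' / (M + 1)) := (ENNReal.div_div_cancel hr' hr'_top).symm
      _ ≤ r / (r' / (M + 1)) := by gcongr; exact min_le_left r 1
  filter_upwards [h.eventually_lt_const hδ] with i hi
  exact hψ.measure_le_of_luxNorm_lt (hu i) hκ.ne' hκ_top hrδ hi

end Orlicz

section Couplings

variable {X : Type*} [MeasurableSpace X]

lemma exists_mem_couplings_luxNorm_le (ψ : ℝ≥0∞ → ℝ≥0∞) (d : X → X → ℝ≥0∞)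
    (μ ν : Measure X) [IsProbabilityMeasure μ] [IsProbabilityMeasure ν] {ε : ℝ≥0∞}
    (hε : ε ≠ 0) :
    ∃ γ ∈ Couplings μ ν, luxNorm ψ γ (fun p => d p.1 p.2) ≤ Wass ψ d μ ν + ε := by
  by_cases h : Wass ψ d μ ν = ⊤
  · exact ⟨μ.prod ν, ⟨inferInstance, by simp, by simp⟩, by simp [h]⟩
  · obtain ⟨γ, hγ, hlt⟩ : ∃ γ ∈ Couplings μ ν,
        luxNorm ψ γ (fun p => d p.1 p.2) < Wass ψ d μ ν + ε := by
      simpa only [Wass, iInf_lt_iff, exists_prop] using ENNReal.lt_add_right h hε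
    exact ⟨γ, hγ, hlt.le⟩

lemma exists_couplings_tendsto_luxNorm {ψ : ℝ≥0∞ → ℝ≥0∞} {d : X → X → ℝ≥0∞}
    {μs : ℕ → Measure X} {μ : Measure X} (hprob : ∀ n, IsProbabilityMeasure (μs n))
    [IsProbabilityMeasure μ] (h : Tendsto (fun n => Wass ψ d (μs n) μ) atTop (𝓝 0)) :
    ∃ γ : ℕ → Measure (X × X), (∀ n, γ n ∈ Couplings (μs n) μ) ∧
      Tendsto (fun n => luxNorm ψ (γ n) (fun p => d p.1 p.2)) atTop (𝓝 0) := by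
  choose γ hγ hle using fun n =>
    exists_mem_couplings_luxNorm_le ψ d (μs n) μ (ε := (n : ℝ≥0∞)⁻¹) (by simp)
  refine ⟨γ, hγ, tendsto_of_tendsto_of_tendsto_of_le_of_le tendsto_const_nhds ?_
    (fun _ => zero_le) hle⟩
  simpa using h.add ENNReal.tendsto_inv_nat_nhds_zero

variable [TopologicalSpace X] [OpensMeasurableSpace X]

lemma abs_integral_sub_integral_le {μ ν : Measure X} {γ : Measure (X × X)}
    (hγ : γ ∈ Couplings μ ν) (φ : X →ᵇ ℝ) :
    |∫ x, φ x ∂μ - ∫ x, φ x ∂ν| ≤ ∫ p, |φ p.1 - φ p.2| ∂γ := by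
  obtain ⟨hγ_prob, rfl, rfl⟩ := hγ
  have hφ := φ.continuous.measurable
  have h₁ : Integrable (fun p : X × X => φ p.1) γ :=
    (φ.integrable _).comp_measurable measurable_fst
  have h₂ : Integrable (fun p : X × X => φ p.2) γ :=
    (φ.integrable _).comp_measurable measurable_snd
  rw [integral_map measurable_fst.aemeasurable hφ.aestronglyMeasurable,
    integral_map measurable_snd.aemeasurable hφ.aestronglyMeasurable, ← integral_sub h₁ h₂]
  exact abs_integral_le_integral_abs

end Couplings

lemma integral_abs_le_add_mul_measureReal {Ω : Type*} [MeasurableSpace Ω] {ν : Measure Ω}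
    [IsProbabilityMeasure ν] {f : Ω → ℝ} (hf : Measurable f) {M : ℝ} (hM : ∀ x, |f x| ≤ M)
    {η : ℝ} (hη : 0 ≤ η) : ∫ x, |f x| ∂ν ≤ η + M * ν.real {x | η ≤ |f x|} := by
  have hS : MeasurableSet {x | η ≤ |f x|} := measurableSet_le measurable_const hf.abs
  have hg : Integrable (fun x => η + {x | η ≤ |f x|}.indicator (fun _ => M) x) ν :=
    (integrable_const η).add ((integrable_const M).indicator hS)
  have hpt : ∀ x, |f x| ≤ η + {x | η ≤ |f x|}.indicator (fun _ => M) x := by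
    intro x
    by_cases hx : η ≤ |f x|
    · rw [indicator_of_mem (by exact hx : x ∈ {x | η ≤ |f x|})]; linarith [hM x]
    · rw [indicator_of_notMem (by exact hx : x ∉ {x | η ≤ |f x|})]; linarith
  calc ∫ x, |f x| ∂ν
      ≤ ∫ x, η + {x | η ≤ |f x|}.indicator (fun _ => M) x ∂ν :=
        integral_mono (Integrable.of_bound hf.abs.aestronglyMeasurable M
          (ae_of_all _ fun x => by simpa using hM x)) hg hpt
    _ = η + M * ν.real {x | η ≤ |f x|} := by
        rw [integral_add (integrable_const η) ((integrable_const M).indicator hS),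
          integral_const, integral_indicator_const _ hS]
        simp [mul_comm]

theorem tendsto_integral_of_tendsto_measure_abs_sub {X : Type*} [TopologicalSpace X]
    [MeasurableSpace X] [OpensMeasurableSpace X] {μs : ℕ → Measure X} {μ : Measure X}
    {γ : ℕ → Measure (X × X)} (hγ : ∀ n, γ n ∈ Couplings (μs n) μ) (φ : X →ᵇ ℝ)
    (h : ∀ η > 0, Tendsto (fun n => γ n {p | η ≤ |φ p.1 - φ p.2|}) atTop (𝓝 0)) :
    Tendsto (fun n => ∫ x, φ x ∂μs n) atTop (𝓝 (∫ x, φ x ∂μ)) := by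
  refine Metric.tendsto_nhds.mpr fun ε hε => ?_
  have hsmall : Tendsto (fun n => 2 * ‖φ‖ * (γ n).real {p | ε / 2 ≤ |φ p.1 - φ p.2|})
      atTop (𝓝 0) := by
    simpa [measureReal_def] using
      ((ENNReal.tendsto_toReal zero_ne_top).comp (h _ (half_pos hε))).const_mul _
  filter_upwards [hsmall.eventually_lt_const (half_pos hε)] with n hn
  have := (hγ n).1
  calc dist (∫ x, φ x ∂μs n) (∫ x, φ x ∂μ)
      ≤ ∫ p, |φ p.1 - φ p.2| ∂γ n := abs_integral_sub_integral_le (hγ n) φ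
    _ ≤ ε / 2 + 2 * ‖φ‖ * (γ n).real {p | ε / 2 ≤ |φ p.1 - φ p.2|} :=
        integral_abs_le_add_mul_measureReal
          ((φ.continuous.measurable.comp measurable_fst).sub
            (φ.continuous.measurable.comp measurable_snd))
          (fun p => φ.dist_le_two_norm p.1 p.2) (half_pos hε).le
    _ < ε := by linarith

theorem tendsto_iSup_measure_of_eventually_notMem {α Ω ι : Type*} [MeasurableSpace α]
    [MeasurableSpace Ω] [StandardBorelSpace Ω] [Nonempty Ω] [Countable ι] {μ : Measure α}
    [IsFiniteMeasure μ] {γ : ι → Measure (α × Ω)} [∀ i, IsFiniteMeasure (γ i)]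
    (hγ : ∀ i, (γ i).fst = μ) {C : ℕ → Set (α × Ω)} (hC : ∀ m, MeasurableSet (C m))
    (h_empty : ∀ a, ∀ᶠ m in atTop, ∀ ω, (a, ω) ∉ C m) :
    Tendsto (fun m => ⨆ i, γ i (C m)) atTop (𝓝 0) := by
  set H : ℕ → α → ℝ≥0∞ := fun m a => ⨆ i, (γ i).condKernel a (Prod.mk a ⁻¹' C m)
  have hH : Tendsto (fun m => ∫⁻ a, H m a ∂μ) atTop (𝓝 0) := by
    have h_lim : ∀ a, Tendsto (fun m => H m a) atTop (𝓝 0) := fun a =>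
      tendsto_const_nhds.congr' <| (h_empty a).mono fun m hm => by
        simp [H, show Prod.mk a ⁻¹' C m = ∅ from eq_empty_iff_forall_notMem.mpr hm]
    simpa using tendsto_lintegral_of_dominated_convergence 1
      (fun m => Measurable.iSup fun i =>
        ProbabilityTheory.Kernel.measurable_kernel_prodMk_left (hC m))
      (fun m => ae_of_all _ fun a => iSup_le fun i => prob_le_one) (by simp)
      (ae_of_all _ h_lim)
  refine tendsto_of_tendsto_of_tendsto_of_le_of_le tendsto_const_nhds hH (fun _ => zero_le)
    fun m => iSup_le fun i => ?_
  rw [← Measure.lintegral_condKernel_mem (hC m), hγ i]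
  exact lintegral_mono fun a => le_iSup (fun i => (γ i).condKernel a (Prod.mk a ⁻¹' C m)) i

namespace IsExtPolish

variable {X : Type*} [TopologicalSpace X] {d : X → X → ℝ≥0∞}

lemma exists_pos_forall_lt_mem (hX : IsExtPolish X d) {y : X} {U : Set X} (hU : U ∈ 𝓝 y) :
    ∃ r > 0, ∀ x, d x y < r → x ∈ U := by
  by_contra! h
  choose u hu huU using fun n : ℕ => h (n : ℝ≥0∞)⁻¹ (by simp)
  have hd : Tendsto (fun n => d (u n) y) atTop (𝓝 0) :=
    tendsto_of_tendsto_of_tendsto_of_le_of_le tendsto_const_nhds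
      ENNReal.tendsto_inv_nat_nhds_zero (fun _ => zero_le) fun n => (hu n).le
  obtain ⟨n, hn⟩ := ((hX.compat u y hd).eventually hU).exists
  exact huU n hn

theorem tendsto_measure_abs_sub [MeasurableSpace X] [PolishSpace X] [BorelSpace X]
    (hX : IsExtPolish X d) {μ : Measure X} [IsFiniteMeasure μ] {γ : ℕ → Measure (X × X)}
    [∀ n, IsFiniteMeasure (γ n)] (hγ : ∀ n, (γ n).snd = μ)
    (hd : ∀ r > 0, Tendsto (fun n => γ n {p | r ≤ d p.1 p.2}) atTop (𝓝 0))
    {φ : X → ℝ} (hφ : Continuous φ) {η : ℝ} (hη : 0 < η) :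
    Tendsto (fun n => γ n {p | η ≤ |φ p.1 - φ p.2|}) atTop (𝓝 0) := by
  cases isEmpty_or_nonempty X
  · simp [eq_empty_of_isEmpty]
  have hdm : Measurable fun p : X × X => d p.1 p.2 := hX.lsc.measurable
  set C : ℕ → Set (X × X) := fun m => {p | d p.1 p.2 < (m : ℝ≥0∞)⁻¹ ∧ η ≤ |φ p.1 - φ p.2|}
  have hC : ∀ m, MeasurableSet (C m) := fun m =>
    (measurableSet_lt hdm measurable_const).inter (measurableSet_le measurable_const
      ((hφ.measurable.comp measurable_fst).sub (hφ.measurable.comp measurable_snd)).abs)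
  have h_empty : ∀ y, ∀ᶠ m in atTop, ∀ x, (y, x) ∉ Prod.swap ⁻¹' C m := by
    intro y
    obtain ⟨r, hr, hrU⟩ := hX.exists_pos_forall_lt_mem
      ((hφ.tendsto y).eventually (Metric.ball_mem_nhds _ hη))
    filter_upwards [ENNReal.tendsto_inv_nat_nhds_zero.eventually_le_const hr] with m hm x hx
    exact (hx.2.trans_lt (hrU x (hx.1.trans_le hm))).false
  have hC_small : Tendsto (fun m => ⨆ n, γ n (C m)) atTop (𝓝 0) := by
    have hγ_swap : ∀ n, ((γ n).map Prod.swap).fst = μ := fun n => by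
      rw [Measure.fst_map_swap, hγ n]
    refine (tendsto_iSup_measure_of_eventually_notMem hγ_swap
      (fun m => measurable_swap (hC m)) h_empty).congr fun m => iSup_congr fun n => ?_
    rw [Measure.map_apply measurable_swap (measurable_swap (hC m)), ← preimage_comp,
      Prod.swap_swap_eq, preimage_id]
  refine ENNReal.tendsto_nhds_zero.mpr fun κ hκ => ?_
  obtain ⟨m, hm⟩ := (hC_small.eventually_le_const (ENNReal.half_pos hκ.ne')).exists
  filter_upwards [(ENNReal.tendsto_nhds_zero.mp (hd (m : ℝ≥0∞)⁻¹ (by simp))) _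
    (ENNReal.half_pos hκ.ne')] with n hn
  calc γ n {p | η ≤ |φ p.1 - φ p.2|}
      ≤ γ n (C m ∪ {p | (m : ℝ≥0∞)⁻¹ ≤ d p.1 p.2}) := measure_mono fun p hp =>
        (lt_or_ge (d p.1 p.2) (m : ℝ≥0∞)⁻¹).imp (fun h => ⟨h, hp⟩) id
    _ ≤ κ / 2 + κ / 2 := (measure_union_le _ _).trans
        (add_le_add ((le_iSup (fun n => γ n (C m)) n).trans hm) hn)
    _ = κ := ENNReal.add_halves κ

end IsExtPolish

/-- convergence in `W_ψ` implies narrow convergence. -/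
theorem narrow_of_wass_tendsto {X : Type*} [TopologicalSpace X] [PolishSpace X]
    [MeasurableSpace X] [BorelSpace X]
    (d : X → X → ℝ≥0∞) (hX : IsExtPolish X d)
    (ψ : ℝ≥0∞ → ℝ≥0∞) (hψ : IsOrlicz ψ)
    (μseq : ℕ → Measure X) (μ : Measure X)
    (hprob : ∀ n, IsProbabilityMeasure (μseq n)) [IsProbabilityMeasure μ]
    (hconv : Tendsto (fun n => Wass ψ d (μseq n) μ) atTop (𝓝 0)) :
    ∀ φ : BoundedContinuousFunction X ℝ,
      Tendsto (fun n => ∫ x, φ x ∂(μseq n)) atTop (𝓝 (∫ x, φ x ∂μ)) := by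
  intro φ
  obtain ⟨γ, hγ, hlux⟩ := exists_couplings_tendsto_luxNorm hprob hconv
  have := fun n => (hγ n).1
  refine tendsto_integral_of_tendsto_measure_abs_sub hγ φ fun η hη => ?_
  exact hX.tendsto_measure_abs_sub (fun n => (hγ n).2.2)
    (fun r hr => hψ.tendsto_measure_le_of_tendsto_luxNorm (fun _ => hX.lsc.measurable) hlux hr)
    φ.continuous hη
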